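/- Let Tᵢ be the Demazure–Lusztig operator Tᵢf = t(sᵢ·f) + (t-1)(f - sᵢ·f)/(1 - xᵢ/x_{i+1}) on Laurent polynomials over ℚ(q,t). If F + G and t·x_{i+1}F + xᵢG are both symmetric in xᵢ and x_{i+1}, then TᵢF = G. -/

import Mathlib

/-- The Laurent monomial `x_a^e` in the ring of Laurent polynomials
`K[x₁^{±1},…,xₙ^{±1}]`, modeled as `AddMonoidAlgebra K (Fin n →₀ ℤ)`. -/
noncomputable def LX (K : Type*) [Field K] (n : ℕ) (a : Fin n) (e : ℤ) :
    AddMonoidAlgebra K (Fin n →₀ ℤ) :=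
  AddMonoidAlgebra.single (Finsupp.single a e) 1

/-- The algebra automorphism of `K[x₁^{±1},…,xₙ^{±1}]` exchanging the variables
`x_a` and `x_b`. -/
noncomputable def swapVars (K : Type*) [Field K] (n : ℕ) (a b : Fin n) :
    AddMonoidAlgebra K (Fin n →₀ ℤ) ≃ₐ[K] AddMonoidAlgebra K (Fin n →₀ ℤ) :=
  AddMonoidAlgebra.domCongr K K (Finsupp.domCongr (Equiv.swap a b))

/-!
Write `x = xᵢ`, `y = x_{i+1}` and `s = sᵢ`, so that `s x = y`, `s y = x`. Applying `s` to the
two symmetry hypotheses and eliminating `s G` gives the ring identity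
`(y - x) G = t (y - x) (s F) + (t - 1) y (F - s F)`.
Dividing by `y` turns this into `(1 - x/y) G = t (1 - x/y) (s F) + (t - 1)(F - s F)`, which is the
defining relation of `Tᵢ F` multiplied by `1 - x/y`; as the Laurent polynomial ring is a domain
and `1 - x/y ≠ 0`, `Tᵢ F = G`.
-/

section LaurentMonomials

variable {K : Type*} [Field K] {n : ℕ}

theorem LX_mul_LX (a : Fin n) (e e' : ℤ) : LX K n a e * LX K n a e' = LX K n a (e + e') := by
  simp [LX, AddMonoidAlgebra.single_mul_single]

theorem LX_zero (a : Fin n) : LX K n a 0 = 1 := by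
  simp [LX, AddMonoidAlgebra.one_def]

theorem swapVars_LX_left (a b : Fin n) (e : ℤ) : swapVars K n a b (LX K n a e) = LX K n b e := by
  simp [swapVars, LX]

theorem swapVars_LX_right (a b : Fin n) (e : ℤ) : swapVars K n a b (LX K n b e) = LX K n a e := by
  simp [swapVars, LX, Equiv.swap_apply_right]

theorem LX_mul_LX_ne_one {a b : Fin n} (hab : a ≠ b) {e : ℤ} (he : e ≠ 0) (e' : ℤ) :
    LX K n a e * LX K n b e' ≠ 1 := by
  intro h
  simp only [LX, AddMonoidAlgebra.single_mul_single, mul_one, AddMonoidAlgebra.one_def] at h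
  have hexp := congrArg (· a) (AddMonoidAlgebra.single_left_injective one_ne_zero h)
  simp [hab.symm, he] at hexp

end LaurentMonomials

theorem sub_mul_eq_of_swap_relations {R : Type*} [CommRing R] {t x y F G sF sG : R}
    (h1 : sF + sG = F + G) (h2 : t * x * sF + y * sG = t * y * F + x * G) :
    (y - x) * G = t * ((y - x) * sF) + (t - 1) * (y * (F - sF)) := by
  linear_combination (-y) * h1 + h2

theorem demazureLusztig_relation_of_swap_invariant {K A : Type*} [Field K] [CommRing A]
    [Algebra K A] (s : A →ₐ[K] A) (t : K) {x y y' : A} (hyy' : y' * y = 1)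
    (hsx : s x = y) (hsy : s y = x) {F G : A}
    (h1 : s (F + G) = F + G) (h2 : s (t • (y * F) + x * G) = t • (y * F) + x * G) :
    (1 - x * y') * G = t • ((1 - x * y') * s F) + (t - 1) • (F - s F) := by
  rw [map_add] at h1
  rw [map_add, map_smul, map_mul, map_mul, hsx, hsy] at h2
  simp only [Algebra.smul_def, map_sub, map_one] at h2 ⊢
  have hyG := sub_mul_eq_of_swap_relations (t := algebraMap K A t) (x := x) (y := y) h1
    (by linear_combination h2)
  linear_combination y' * hyG
    + (algebraMap K A t * s F + (algebraMap K A t - 1) * (F - s F) - G) * hyy'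

theorem symmetric_implies_Ti_eq_general (K : Type*) [Field K] (t : K)
    (n i : ℕ) (hi : i + 1 < n)
    (T : AddMonoidAlgebra K (Fin n →₀ ℤ) →ₗ[K] AddMonoidAlgebra K (Fin n →₀ ℤ))
    (hT : ∀ f,
      (1 - LX K n ⟨i, Nat.lt_of_succ_lt hi⟩ 1 * LX K n ⟨i + 1, hi⟩ (-1)) * T f
        = t • ((1 - LX K n ⟨i, Nat.lt_of_succ_lt hi⟩ 1 * LX K n ⟨i + 1, hi⟩ (-1)) *
            swapVars K n ⟨i, Nat.lt_of_succ_lt hi⟩ ⟨i + 1, hi⟩ f)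
          + (t - 1) • (f - swapVars K n ⟨i, Nat.lt_of_succ_lt hi⟩ ⟨i + 1, hi⟩ f))
    (F G : AddMonoidAlgebra K (Fin n →₀ ℤ))
    (h1 : swapVars K n ⟨i, Nat.lt_of_succ_lt hi⟩ ⟨i + 1, hi⟩ (F + G) = F + G)
    (h2 : swapVars K n ⟨i, Nat.lt_of_succ_lt hi⟩ ⟨i + 1, hi⟩
        (t • (LX K n ⟨i + 1, hi⟩ 1 * F) + LX K n ⟨i, Nat.lt_of_succ_lt hi⟩ 1 * G)
      = t • (LX K n ⟨i + 1, hi⟩ 1 * F) + LX K n ⟨i, Nat.lt_of_succ_lt hi⟩ 1 * G) :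
    T F = G := by
  set a : Fin n := ⟨i, Nat.lt_of_succ_lt hi⟩
  set b : Fin n := ⟨i + 1, hi⟩
  have hab : a ≠ b := Fin.ne_of_val_ne (Nat.succ_ne_self i).symm
  have hD : 1 - LX K n a 1 * LX K n b (-1) ≠ 0 :=
    sub_ne_zero.mpr (LX_mul_LX_ne_one hab one_ne_zero (-1)).symm
  have hinv : LX K n b (-1) * LX K n b 1 = 1 := by rw [LX_mul_LX, neg_add_cancel, LX_zero]
  have hG := demazureLusztig_relation_of_swap_invariant (swapVars K n a b).toAlgHom t hinv
    (swapVars_LX_left a b 1) (swapVars_LX_right a b 1) h1 h2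
  exact mul_left_cancel₀ hD ((hT F).trans hG.symm)

/-- Let `Tᵢ` be the Demazure–Lusztig operator
`Tᵢ f = t(sᵢ·f) + (t-1)(f - sᵢ·f)/(1 - xᵢ/x_{i+1})` on Laurent polynomials over
`ℚ(q,t)` (characterized by multiplying through by `1 - xᵢ/x_{i+1}`).  If `F + G`
and `t x_{i+1} F + xᵢ G` are both symmetric in `xᵢ` and `x_{i+1}`, then `TᵢF = G`. -/
theorem symmetric_implies_Ti_eq (K : Type*) [Field K] (q t : K)
    (n i : ℕ) (hi : i + 1 < n)
    (T : AddMonoidAlgebra K (Fin n →₀ ℤ) →ₗ[K] AddMonoidAlgebra K (Fin n →₀ ℤ))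
    (hT : ∀ f,
      (1 - LX K n ⟨i, Nat.lt_of_succ_lt hi⟩ 1 * LX K n ⟨i + 1, hi⟩ (-1)) * T f
        = t • ((1 - LX K n ⟨i, Nat.lt_of_succ_lt hi⟩ 1 * LX K n ⟨i + 1, hi⟩ (-1)) *
            swapVars K n ⟨i, Nat.lt_of_succ_lt hi⟩ ⟨i + 1, hi⟩ f)
          + (t - 1) • (f - swapVars K n ⟨i, Nat.lt_of_succ_lt hi⟩ ⟨i + 1, hi⟩ f))
    (F G : AddMonoidAlgebra K (Fin n →₀ ℤ))
    (h1 : swapVars K n ⟨i, Nat.lt_of_succ_lt hi⟩ ⟨i + 1, hi⟩ (F + G) = F + G)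
    (h2 : swapVars K n ⟨i, Nat.lt_of_succ_lt hi⟩ ⟨i + 1, hi⟩
        (t • (LX K n ⟨i + 1, hi⟩ 1 * F) + LX K n ⟨i, Nat.lt_of_succ_lt hi⟩ 1 * G)
      = t • (LX K n ⟨i + 1, hi⟩ 1 * F) + LX K n ⟨i, Nat.lt_of_succ_lt hi⟩ 1 * G) :
    T F = G :=
  symmetric_implies_Ti_eq_general K t n i hi T hT F G h1 h2
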